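/- Under the stated hypotheses, the twisted Long–Moody matrices satisfy the Artin relation for j = i+1: G_{i+1} S_i G_{i+1} = G_i G_{i+1} S_i for all 1 ≤ i ≤ n−1. -/

import Mathlib

open Matrix

set_option linter.unusedSectionVars false
set_option maxHeartbeats 1000000

namespace KLM

variable {k : Type*} [Field k]

/-- Assemble an `Nn × Nn` matrix from an `n × n` array of `N × N` blocks,
blocks being indexed by natural numbers (only indices `< n` are relevant). -/
def blk (n N : ℕ) (B : ℕ → ℕ → Matrix (Fin N) (Fin N) k) :
    Matrix (Fin n × Fin N) (Fin n × Fin N) k :=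
  Matrix.of fun p q => B p.1.1 q.1.1 p.2 q.2

/-- The Dettweiler–Reiter convolution matrix `G_j = ρ^{DR}_λ(x_j)` (0-based index `j`):
the identity except that the `j`-th block row is
`(λ(g_0−1), …, λ(g_{j−1}−1), λ g_j, g_{j+1}−1, …, g_{n−1}−1)`. -/
def G (n N : ℕ) (g : ℕ → Matrix (Fin N) (Fin N) k) (lam : k) (j : ℕ) :
    Matrix (Fin n × Fin N) (Fin n × Fin N) k :=
  blk n N fun r c =>
    if r = j then
      (if c < j then lam • (g c - 1) else if c = j then lam • g j else g c - 1)
    else if r = c then 1 else 0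

/-- The Long–Moody matrix `S_i = ρ^{LM}(σ_i)` (0-based index `i`):
`(s_i ⊕ ⋯ ⊕ s_i) · diag(1, …, 1, R_i, 1, …, 1)` where `R_i` is the
`2×2` block matrix with rows `(0, g_i)` and `(1, 1 − g_{i+1})`
placed in block rows/columns `i, i+1`. -/
def S (n N : ℕ) (g s : ℕ → Matrix (Fin N) (Fin N) k) (i : ℕ) :
    Matrix (Fin n × Fin N) (Fin n × Fin N) k :=
  blk n N fun r c =>
    if r = i ∧ c = i then 0
    else if r = i ∧ c = i + 1 then s i * g i
    else if r = i + 1 ∧ c = i then s i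
    else if r = i + 1 ∧ c = i + 1 then s i * (1 - g (i + 1))
    else if r = c then s i
    else 0

def GB {N : ℕ} (g : ℕ → Matrix (Fin N) (Fin N) k) (lam : k) (j : ℕ) :
    ℕ → ℕ → Matrix (Fin N) (Fin N) k :=
  fun r c =>
    if r = j then
      (if c < j then lam • (g c - 1) else if c = j then lam • g j else g c - 1)
    else if r = c then 1 else 0

def SB {N : ℕ} (g s : ℕ → Matrix (Fin N) (Fin N) k) (i : ℕ) :
    ℕ → ℕ → Matrix (Fin N) (Fin N) k :=
  fun r c =>
    if r = i ∧ c = i then 0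
    else if r = i ∧ c = i + 1 then s i * g i
    else if r = i + 1 ∧ c = i then s i
    else if r = i + 1 ∧ c = i + 1 then s i * (1 - g (i + 1))
    else if r = c then s i
    else 0

lemma G_eq (n N : ℕ) (g : ℕ → Matrix (Fin N) (Fin N) k) (lam : k) (j : ℕ) :
    G n N g lam j = blk n N (GB g lam j) := rfl

lemma S_eq (n N : ℕ) (g s : ℕ → Matrix (Fin N) (Fin N) k) (i : ℕ) :
    S n N g s i = blk n N (SB g s i) := rfl

lemma blk_mul {n N : ℕ} (B C : ℕ → ℕ → Matrix (Fin N) (Fin N) k) :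
    blk n N B * blk n N C = blk n N fun r c => ∑ t ∈ Finset.range n, B r t * C t c := by
  ext ⟨r, a⟩ ⟨c, b⟩
  simp only [blk, Matrix.mul_apply, Matrix.of_apply, Fintype.sum_prod_type,
    Matrix.sum_apply, ← Fin.sum_univ_eq_sum_range]

lemma blk_congr {n N : ℕ} {B B' : ℕ → ℕ → Matrix (Fin N) (Fin N) k}
    (h : ∀ r c, r < n → c < n → B r c = B' r c) : blk n N B = blk n N B' := by
  ext ⟨r, a⟩ ⟨c, b⟩
  simp only [blk, Matrix.of_apply, h r.1 c.1 r.2 c.2]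

lemma sum_range_one {M : Type*} [AddCommMonoid M] {n : ℕ} (a : ℕ) (ha : a < n)
    (f : ℕ → M) (h : ∀ t, t < n → t ≠ a → f t = 0) :
    ∑ t ∈ Finset.range n, f t = f a :=
  Finset.sum_eq_single_of_mem a (Finset.mem_range.2 ha)
    (fun t ht hta => h t (Finset.mem_range.1 ht) hta)

lemma sum_range_two {M : Type*} [AddCommMonoid M] {n : ℕ} (a b : ℕ) (ha : a < n)
    (hb : b < n) (hab : a ≠ b) (f : ℕ → M) (h : ∀ t, t < n → t ≠ a → t ≠ b → f t = 0) :
    ∑ t ∈ Finset.range n, f t = f a + f b := by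
  rw [← Finset.sum_pair hab]
  refine (Finset.sum_subset ?_ ?_).symm
  · intro x hx
    simp only [Finset.mem_insert, Finset.mem_singleton] at hx
    rcases hx with rfl | rfl <;> exact Finset.mem_range.2 (by assumption)
  · intro x hx hnx
    simp only [Finset.mem_insert, Finset.mem_singleton, not_or] at hnx
    exact h x (Finset.mem_range.1 hx) hnx.1 hnx.2

lemma SB_zero {N : ℕ} (g s : ℕ → Matrix (Fin N) (Fin N) k) (i t c : ℕ)
    (h1 : ¬ (t = i + 1 ∧ c = i)) (h2 : ¬ (t = i ∧ c = i + 1))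
    (h3 : ¬ (t = i + 1 ∧ c = i + 1)) (h4 : t ≠ c ∨ (t = i ∧ c = i)) :
    SB g s i t c = 0 := by
  simp only [SB]
  split_ifs with a1 a2 a3 a4 a5 <;> first | rfl | (exfalso; simp -failIfUnchanged only [true_and, and_true] at *; omega) |
    (exfalso; rcases h4 with h4 | h4 <;> simp -failIfUnchanged only [true_and, and_true] at * <;> omega)

lemma sumS {n N : ℕ} (g s : ℕ → Matrix (Fin N) (Fin N) k) (i : ℕ) (hi : i + 1 < n)
    (F : ℕ → Matrix (Fin N) (Fin N) k) (c : ℕ) (hc : c < n) :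
    ∑ t ∈ Finset.range n, F t * SB g s i t c =
      if c = i then F (i + 1) * s i
      else if c = i + 1 then F i * (s i * g i) + F (i + 1) * (s i * (1 - g (i + 1)))
      else F c * s i := by
  rcases eq_or_ne c i with hci | hci
  · rw [if_pos hci]
    rw [sum_range_one (i + 1) hi]
    · have : SB g s i (i + 1) c = s i := by
        simp only [SB]
        split_ifs with a1 a2 a3 a4 a5 <;> first | rfl | (exfalso; simp -failIfUnchanged only [true_and, and_true] at *; omega)
      rw [this]
    · intro t ht hti
      rw [SB_zero g s i t c (by omega) (by omega) (by omega) (by omega), mul_zero]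
  · rcases eq_or_ne c (i + 1) with hcj | hcj
    · rw [if_neg hci, if_pos hcj]
      rw [sum_range_two i (i + 1) (by omega) hi (by omega)]
      · have e1 : SB g s i i c = s i * g i := by
          simp only [SB]
          split_ifs with a1 a2 a3 a4 a5 <;> first | rfl | (exfalso; simp -failIfUnchanged only [true_and, and_true] at *; omega)
        have e2 : SB g s i (i + 1) c = s i * (1 - g (i + 1)) := by
          simp only [SB]
          split_ifs with a1 a2 a3 a4 a5 <;> first | rfl | (exfalso; simp -failIfUnchanged only [true_and, and_true] at *; omega)
        rw [e1, e2]
      · intro t ht hti htj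
        rw [SB_zero g s i t c (by omega) (by omega) (by omega) (by omega), mul_zero]
    · rw [if_neg hci, if_neg hcj]
      rw [sum_range_one c hc]
      · have : SB g s i c c = s i := by
          simp only [SB]
          split_ifs with a1 a2 a3 a4 a5 <;> first | rfl | (exfalso; simp -failIfUnchanged only [true_and, and_true] at *; omega)
        rw [this]
      · intro t ht htc
        rw [SB_zero g s i t c (by omega) (by omega) (by omega) (by omega), mul_zero]

lemma sumG {n N : ℕ} (g : ℕ → Matrix (Fin N) (Fin N) k) (lam : k) (j : ℕ) (hj : j < n)
    (F : ℕ → Matrix (Fin N) (Fin N) k) (c : ℕ) (hc : c < n) :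
    ∑ t ∈ Finset.range n, F t * GB g lam j t c =
      (if c = j then 0 else F c) + F j * GB g lam j j c := by
  rcases eq_or_ne c j with hcj | hcj
  · rw [if_pos hcj, zero_add]
    rw [sum_range_one j hj]
    intro t ht htj
    have : GB g lam j t c = 0 := by
      simp only [GB, if_neg htj]
      rw [if_neg (by omega : ¬ t = c)]
    rw [this, mul_zero]
  · rw [if_neg hcj]
    rw [sum_range_two c j hc hj (by omega)]
    · have e1 : GB g lam j c c = 1 := by
        simp [GB, hcj]
      rw [e1, mul_one]
    · intro t ht htc htj
      have : GB g lam j t c = 0 := by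
        simp only [GB, if_neg htj]
        rw [if_neg (by omega : ¬ t = c)]
      rw [this, mul_zero]

lemma sumD {n N : ℕ} (r : ℕ) (hr : r < n) (X : ℕ → Matrix (Fin N) (Fin N) k) :
    ∑ t ∈ Finset.range n, (if r = t then (1 : Matrix (Fin N) (Fin N) k) else 0) * X t
      = X r := by
  rw [sum_range_one r hr]
  · rw [if_pos rfl, one_mul]
  · intro t ht htr
    rw [if_neg (by omega), zero_mul]

section keys
variable {R : Type*} [Ring R] [Algebra k R]

lemma key1 (a b t : R) (lam : k) (e1 : t * a = b * t) :
    t * a * (lam • (a - 1)) = (b - 1) * (lam • b) * t := by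
  have e1' : t * a * a = b * b * t := by rw [e1, mul_assoc, e1, ← mul_assoc]
  rw [mul_smul_comm, mul_smul_comm, smul_mul_assoc]
  congr 1
  calc t * a * (a - 1) = t * a * a - t * a := by noncomm_ring
    _ = b * b * t - b * t := by rw [e1', e1]
    _ = (b - 1) * b * t := by noncomm_ring

lemma h3aux (a b t : R) (e2 : b * t * b = a * b * t) :
    (b - 1) * b * (t * (1 - b)) = (b - 1) * (b * t) - (b - 1) * (a * (b * t)) := by
  have h : b * (t * (1 - b)) = b * t - a * (b * t) := by
    calc b * (t * (1 - b)) = b * t - b * t * b := by noncomm_ring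
      _ = b * t - a * (b * t) := by rw [e2, mul_assoc]
  calc (b - 1) * b * (t * (1 - b)) = (b - 1) * (b * (t * (1 - b))) := by rw [mul_assoc]
    _ = (b - 1) * (b * t - a * (b * t)) := by rw [h]
    _ = (b - 1) * (b * t) - (b - 1) * (a * (b * t)) := by noncomm_ring

lemma key2core (a b t : R) (e1 : t * a = b * t) (e2 : b * t * b = a * b * t) :
    t * a * b = a * (t * a) + (b - 1) * (a - 1) * (t * a) + (b - 1) * b * (t * (1 - b)) := by
  rw [h3aux a b t e2, e1, e2]
  noncomm_ring

lemma key2 (a b t : R) (lam : k) (e1 : t * a = b * t) (e2 : b * t * b = a * b * t) :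
    t * a * (lam • b) =
      (lam • a + (b - 1) * (lam • (a - 1))) * (t * a)
        + (b - 1) * (lam • b) * (t * (1 - b)) := by
  calc t * a * (lam • b) = lam • (t * a * b) := by rw [mul_smul_comm]
    _ = lam • (a * (t * a) + (b - 1) * (a - 1) * (t * a) + (b - 1) * b * (t * (1 - b))) := by
        rw [key2core a b t e1 e2]
    _ = _ := by
        simp only [smul_add, smul_mul_assoc, mul_smul_comm, add_mul]

lemma key0 (a b t : R) (lam : k) (e1 : t * a = b * t) (e2 : b * t * b = a * b * t) :
    lam • (a - 1) * (t * a) + lam • b * (t * (1 - b)) = 0 := by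
  have h : (a - 1) * (t * a) + b * (t * (1 - b)) = 0 := by
    have hb : b * (t * (1 - b)) = b * t - a * (b * t) := by
      calc b * (t * (1 - b)) = b * t - b * t * b := by noncomm_ring
        _ = b * t - a * (b * t) := by rw [e2, mul_assoc]
    rw [hb, e1]
    noncomm_ring
  calc lam • (a - 1) * (t * a) + lam • b * (t * (1 - b))
      = lam • ((a - 1) * (t * a) + b * (t * (1 - b))) := by
        simp only [smul_add, smul_mul_assoc]
    _ = 0 := by rw [h, smul_zero]

lemma key3' (a b t x : R) (e1 : t * a = b * t) (e3 : t * x = x * t) :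
    t * a * x = (x + (b - 1) * x) * t := by
  calc t * a * x = b * t * x := by rw [e1]
    _ = b * (x * t) := by rw [mul_assoc, e3]
    _ = (x + (b - 1) * x) * t := by noncomm_ring

lemma key3 (a b t x : R) (lam : k) (e1 : t * a = b * t) (e3 : t * x = x * t) :
    t * a * (lam • x) = (lam • x + (b - 1) * (lam • x)) * t := by
  calc t * a * (lam • x) = lam • (t * a * x) := by rw [mul_smul_comm]
    _ = lam • ((x + (b - 1) * x) * t) := by rw [key3' a b t x e1 e3]
    _ = _ := by simp only [add_mul, smul_add, smul_mul_assoc, mul_smul_comm]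

end keys

lemma GB_ne {N : ℕ} (g : ℕ → Matrix (Fin N) (Fin N) k) (lam : k) {j r : ℕ} (h : r ≠ j)
    (c : ℕ) : GB g lam j r c = if r = c then 1 else 0 := by
  simp [GB, h]

/-- Artin relation for `j = i+1`: `G_{i+1} S_i G_{i+1} = G_i G_{i+1} S_i`. -/
theorem twistedLM_artin_succ
    (N n : ℕ) (hN : 1 ≤ N) (hn : 2 ≤ n)
    (g s : ℕ → Matrix (Fin N) (Fin N) k) (lam : k) (hlam : lam ≠ 0)
    (hgu : ∀ j, j < n → IsUnit (g j))
    (hsu : ∀ i, i + 1 < n → IsUnit (s i))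
    (hbr1 : ∀ i, i + 2 < n → s i * s (i + 1) * s i = s (i + 1) * s i * s (i + 1))
    (hbr2 : ∀ i j, i + 1 < n → j + 1 < n → (i + 2 ≤ j ∨ j + 2 ≤ i) →
      s i * s j = s j * s i)
    (ha1 : ∀ i, i + 1 < n → s i * g i = g (i + 1) * s i)
    (ha2 : ∀ i, i + 1 < n → g (i + 1) * s i * g (i + 1) = g i * g (i + 1) * s i)
    (ha3 : ∀ i j, i + 1 < n → j < n → j ≠ i → j ≠ i + 1 → s i * g j = g j * s i) :
    ∀ i, i + 1 < n →
      G n N g lam (i + 1) * S n N g s i * G n N g lam (i + 1) =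
        G n N g lam i * G n N g lam (i + 1) * S n N g s i := by
  intro i hij
  have hi : i < n := by omega
  have hne : ¬ i = i + 1 := by omega
  have e1 := ha1 i hij
  have e2 := ha2 i hij
  have hρi : GB g lam (i + 1) (i + 1) i = lam • (g i - 1) := by simp [GB]
  have hρj : GB g lam (i + 1) (i + 1) (i + 1) = lam • g (i + 1) := by simp [GB]
  have hσi : GB g lam i i i = lam • g i := by simp [GB]
  have hσj : GB g lam i i (i + 1) = g (i + 1) - 1 := by simp [GB]
  rw [G_eq n N g lam (i + 1), G_eq n N g lam i, S_eq, blk_mul, blk_mul, blk_mul, blk_mul]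
  apply blk_congr
  intro r c hr hc
  beta_reduce
  rcases eq_or_ne r i with hri | hri
  · rw [hri]
    -- LHS: row i of G (i+1) is a delta row
    have hL : ∀ t, t < n →
        (∑ u ∈ Finset.range n, GB g lam (i + 1) i u * SB g s i u t) = SB g s i i t := by
      intro t ht
      rw [Finset.sum_congr rfl fun u _ => by rw [GB_ne g lam (by omega : i ≠ i + 1) u]]
      exact sumD i hi _
    rw [Finset.sum_congr rfl fun t ht => by rw [hL t (Finset.mem_range.1 ht)]]
    rw [sumG g lam (i + 1) hij _ c hc]
    -- RHS: row i of G i is the full row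
    rw [Finset.sum_congr rfl fun t ht => by
      rw [sumG g lam (i + 1) hij (GB g lam i i) t (Finset.mem_range.1 ht)]]
    rw [sumS g s i hij _ c hc]
    have hSrc : ∀ t, SB g s i i t = if t = i + 1 then s i * g i else 0 := by
      intro t
      simp only [SB]
      split_ifs <;> first | rfl | (exfalso; simp -failIfUnchanged only [true_and, and_true] at *; omega)
    have hSj : SB g s i i (i + 1) = s i * g i := by rw [hSrc]; simp
    rw [hSj, hSrc c]
    rw [if_pos (rfl : i + 1 = i + 1), if_neg hne, zero_add]
    rcases eq_or_ne c i with hci | hci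
    · rw [hci, if_neg hne, if_neg hne, if_pos (rfl : i = i), hρi, hρj, hσj, zero_add]
      exact key1 (g i) (g (i + 1)) (s i) lam e1
    · rcases eq_or_ne c (i + 1) with hcj | hcj
      · rw [hcj, if_pos (rfl : i + 1 = i + 1), if_pos (rfl : i + 1 = i + 1),
          if_neg (show ¬ i + 1 = i by omega), zero_add, hρi, hρj, hσi, hσj]
        exact key2 (g i) (g (i + 1)) (s i) lam e1 e2
      · rw [if_neg hcj, if_neg hcj, if_neg hci, if_neg hcj, zero_add, hσj]
        have hσρ : GB g lam i i c = GB g lam (i + 1) (i + 1) c := by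
          simp only [GB, if_pos (rfl : i = i), if_pos (rfl : i + 1 = i + 1)]
          split_ifs <;> first | rfl | (exfalso; omega)
        rw [← hσρ]
        have e3 : s i * (g c - 1) = (g c - 1) * s i := by
          rw [mul_sub, sub_mul, ha3 i c hij hc hci hcj, mul_one, one_mul]
        by_cases hclt : c < i
        · rw [show GB g lam i i c = lam • (g c - 1) by
            simp [GB, hclt]]
          rw [if_neg hcj]
          exact key3 (g i) (g (i + 1)) (s i) (g c - 1) lam e1 e3
        · rw [show GB g lam i i c = g c - 1 by
            simp [GB, hclt, hci]]
          rw [if_neg hcj]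
          exact key3' (g i) (g (i + 1)) (s i) (g c - 1) e1 e3
  · rcases eq_or_ne r (i + 1) with hrj | hrj
    · rw [hrj]
      -- LHS inner: row i+1 of G (i+1) is the full row ρ
      rw [Finset.sum_congr rfl fun t ht => by
        rw [sumS g s i hij (GB g lam (i + 1) (i + 1)) t (Finset.mem_range.1 ht)]]
      rw [sumG g lam (i + 1) hij _ c hc]
      -- RHS inner: row i+1 of G i is a delta row
      have hR : ∀ t, t < n →
          (∑ u ∈ Finset.range n, GB g lam i (i + 1) u * GB g lam (i + 1) u t) =
            GB g lam (i + 1) (i + 1) t := by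
        intro t ht
        rw [Finset.sum_congr rfl fun u _ => by
          rw [GB_ne g lam (by omega : i + 1 ≠ i) u]]
        exact sumD (i + 1) hij _
      rw [Finset.sum_congr rfl fun t ht => by rw [hR t (Finset.mem_range.1 ht)]]
      rw [sumS g s i hij _ c hc]
      have hM1 : (if (i + 1 : ℕ) = i then GB g lam (i + 1) (i + 1) (i + 1) * s i
          else if (i + 1 : ℕ) = i + 1 then
            GB g lam (i + 1) (i + 1) i * (s i * g i) +
              GB g lam (i + 1) (i + 1) (i + 1) * (s i * (1 - g (i + 1)))
          else GB g lam (i + 1) (i + 1) (i + 1) * s i) = 0 := by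
        rw [if_neg (show ¬ i + 1 = i by omega), if_pos (rfl : i + 1 = i + 1), hρi, hρj]
        exact key0 (g i) (g (i + 1)) (s i) lam e1 e2
      rw [hM1, zero_mul, add_zero]
      rcases eq_or_ne c (i + 1) with hcj | hcj
      · rw [if_pos hcj, hcj, if_neg (show ¬ i + 1 = i by omega),
          if_pos (rfl : i + 1 = i + 1), hρi, hρj]
        exact (key0 (g i) (g (i + 1)) (s i) lam e1 e2).symm
      · rw [if_neg hcj]
    · -- generic row r ∉ {i, i+1}
      have hL : ∀ t, t < n →
          (∑ u ∈ Finset.range n, GB g lam (i + 1) r u * SB g s i u t) = SB g s i r t := by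
        intro t ht
        rw [Finset.sum_congr rfl fun u _ => by rw [GB_ne g lam hrj u]]
        exact sumD r hr _
      rw [Finset.sum_congr rfl fun t ht => by rw [hL t (Finset.mem_range.1 ht)]]
      rw [sumG g lam (i + 1) hij _ c hc]
      have hR : ∀ t, t < n →
          (∑ u ∈ Finset.range n, GB g lam i r u * GB g lam (i + 1) u t) =
            GB g lam (i + 1) r t := by
        intro t ht
        rw [Finset.sum_congr rfl fun u _ => by rw [GB_ne g lam hri u]]
        exact sumD r hr _
      rw [Finset.sum_congr rfl fun t ht => by rw [hR t (Finset.mem_range.1 ht)]]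
      rw [Finset.sum_congr rfl fun t _ => by rw [GB_ne g lam hrj t]]
      rw [sumD r hr _]
      have hSr : ∀ t, SB g s i r t = if r = t then s i else 0 := by
        intro t
        simp only [SB]
        split_ifs <;> first | rfl | (exfalso; simp -failIfUnchanged only [true_and, and_true] at *; omega)
      rw [hSr c, hSr (i + 1), if_neg (show ¬ r = i + 1 from hrj), zero_mul, add_zero]
      split_ifs with h1 h2 <;> first | rfl | (exfalso; omega)


end KLM
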